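/- Let (θᵏ)ₖ be a sequence of dual feasible points, let (β°, β₀°, ξ°, ξ*°, ε°) be primal feasible, let θ° ∈ ℝ^{2n+k₁+k₂} satisfy the zero duality gap identity ½‖β°‖² + C(νε° + (1/n)Σᵢ(ξ°ᵢ + ξ*°ᵢ)) = −f(θ°), and assume f(θᵏ) → f(θ°) as k → ∞. Then β(θᵏ) → β° in ℝᵖ. -/

import Mathlib

open Matrix BigOperators

/-- Index type for the dual variables θ = (α, α*, γ, μ). -/
abbrev dIdx (n k₁ k₂ : ℕ) := (Fin n ⊕ Fin n) ⊕ (Fin k₁ ⊕ Fin k₂)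

/-- The stacked matrix M = (X; −X; A; −Γ). -/
noncomputable def Mmat {n p k₁ k₂ : ℕ} (X : Matrix (Fin n) (Fin p) ℝ)
    (A : Matrix (Fin k₁) (Fin p) ℝ) (Γ : Matrix (Fin k₂) (Fin p) ℝ) :
    Matrix (dIdx n k₁ k₂) (Fin p) ℝ :=
  Matrix.fromRows (Matrix.fromRows X (-X)) (Matrix.fromRows A (-Γ))

/-- The linear term l = (y, −y, b, −d). -/
noncomputable def lvec {n k₁ k₂ : ℕ} (y : Fin n → ℝ) (b : Fin k₁ → ℝ)
    (d : Fin k₂ → ℝ) : dIdx n k₁ k₂ → ℝ :=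
  Sum.elim (Sum.elim y (-y)) (Sum.elim b (-d))

/-- The dual objective f(θ) = ½ θᵀ Q̄ θ + lᵀ θ with Q̄ = M Mᵀ. -/
noncomputable def fObj {n p k₁ k₂ : ℕ} (X : Matrix (Fin n) (Fin p) ℝ)
    (A : Matrix (Fin k₁) (Fin p) ℝ) (Γ : Matrix (Fin k₂) (Fin p) ℝ)
    (y : Fin n → ℝ) (b : Fin k₁ → ℝ) (d : Fin k₂ → ℝ)
    (θ : dIdx n k₁ k₂ → ℝ) : ℝ :=
  (1 / 2) * (θ ⬝ᵥ ((Mmat X A Γ * (Mmat X A Γ)ᵀ) *ᵥ θ)) + lvec y b d ⬝ᵥ θ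

/-- β(θ) = −Xᵀ(α − α*) − Aᵀγ + Γᵀμ for θ = (α, α*, γ, μ). -/
noncomputable def betaOf {n p k₁ k₂ : ℕ} (X : Matrix (Fin n) (Fin p) ℝ)
    (A : Matrix (Fin k₁) (Fin p) ℝ) (Γ : Matrix (Fin k₂) (Fin p) ℝ)
    (θ : dIdx n k₁ k₂ → ℝ) : Fin p → ℝ :=
  -(Xᵀ *ᵥ fun i => θ (.inl (.inl i)) - θ (.inl (.inr i)))
    - Aᵀ *ᵥ (fun j => θ (.inr (.inl j))) + Γᵀ *ᵥ (fun j => θ (.inr (.inr j)))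

/-- Dual feasibility of θ = (α, α*, γ, μ). -/
def DualFeasible {n k₁ k₂ : ℕ} (C ν : ℝ) (θ : dIdx n k₁ k₂ → ℝ) : Prop :=
  (∀ i : Fin n, 0 ≤ θ (.inl (.inl i)) ∧ θ (.inl (.inl i)) ≤ C / n) ∧
  (∀ i : Fin n, 0 ≤ θ (.inl (.inr i)) ∧ θ (.inl (.inr i)) ≤ C / n) ∧
  (∑ i : Fin n, (θ (.inl (.inl i)) + θ (.inl (.inr i))) ≤ C * ν) ∧
  (∑ i : Fin n, (θ (.inl (.inl i)) - θ (.inl (.inr i))) = 0) ∧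
  (∀ j : Fin k₁, 0 ≤ θ (.inr (.inl j)))

/-- Primal feasibility of (β, β₀, ξ, ξ*, ε). -/
def PrimalFeasible {n p k₁ k₂ : ℕ} (X : Matrix (Fin n) (Fin p) ℝ)
    (A : Matrix (Fin k₁) (Fin p) ℝ) (Γ : Matrix (Fin k₂) (Fin p) ℝ)
    (y : Fin n → ℝ) (b : Fin k₁ → ℝ) (d : Fin k₂ → ℝ)
    (β : Fin p → ℝ) (β₀ : ℝ) (ξ ξs : Fin n → ℝ) (ε : ℝ) : Prop :=
  (∀ i, X i ⬝ᵥ β + β₀ - y i ≤ ε + ξ i) ∧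
  (∀ i, y i - X i ⬝ᵥ β - β₀ ≤ ε + ξs i) ∧
  (∀ i, 0 ≤ ξ i) ∧ (∀ i, 0 ≤ ξs i) ∧ 0 ≤ ε ∧
  (∀ j, (A *ᵥ β) j ≤ b j) ∧ Γ *ᵥ β = d

/-! Writing f(θ) = ½‖β(θ)‖² + lᵀθ (because Mᵀθ = −β(θ)), the pairing of a dual feasible θ with a
primal feasible (β, β₀, ξ, ξ*, ε) satisfies lᵀθ + β(θ)ᵀβ + C(νε + (1/n)Σᵢ(ξᵢ + ξ*ᵢ)) ≥ 0: this is
weak duality, each constraint being multiplied by its nonnegative multiplier. Completing the square,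
f(θ) + P(β, β₀, ξ, ξ*, ε) ≥ ½‖β(θ) − β‖². At a zero-gap pair P = −f(θ°), so
½‖β(θᵏ) − β°‖² ≤ f(θᵏ) − f(θ°) → 0. -/

section DualGeometry

variable {n p k₁ k₂ : ℕ} (X : Matrix (Fin n) (Fin p) ℝ) (A : Matrix (Fin k₁) (Fin p) ℝ)
  (Γ : Matrix (Fin k₂) (Fin p) ℝ)

lemma lvec_sub (y y' : Fin n → ℝ) (b b' : Fin k₁ → ℝ) (d d' : Fin k₂ → ℝ) :
    lvec y b d - lvec y' b' d' = lvec (y - y') (b - b') (d - d') := by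
  ext ((i | i) | (j | j)) <;> simp [lvec, sub_eq_add_neg, add_comm]

lemma lvec_dotProduct (y : Fin n → ℝ) (b : Fin k₁ → ℝ) (d : Fin k₂ → ℝ)
    (θ : dIdx n k₁ k₂ → ℝ) :
    lvec y b d ⬝ᵥ θ = ∑ i, y i * (θ (.inl (.inl i)) - θ (.inl (.inr i)))
      + ∑ j, b j * θ (.inr (.inl j)) - ∑ j, d j * θ (.inr (.inr j)) := by
  simp only [dotProduct, lvec, Fintype.sum_sum_type, Sum.elim_inl, Sum.elim_inr, Pi.neg_apply,
    neg_mul, Finset.sum_neg_distrib, mul_sub, Finset.sum_sub_distrib]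
  ring

lemma Mmat_mulVec (β : Fin p → ℝ) :
    Mmat X A Γ *ᵥ β = lvec (X *ᵥ β) (A *ᵥ β) (Γ *ᵥ β) := by
  simp [Mmat, lvec, neg_mulVec]

lemma betaOf_eq_neg_transpose_mulVec (θ : dIdx n k₁ k₂ → ℝ) :
    betaOf X A Γ θ = -((Mmat X A Γ)ᵀ *ᵥ θ) := by
  rw [betaOf, ← Pi.sub_def, mulVec_sub]
  simp only [Mmat, transpose_fromRows, fromCols_mulVec, transpose_neg, neg_mulVec,
    Function.comp_def]
  abel

lemma fObj_eq (y : Fin n → ℝ) (b : Fin k₁ → ℝ) (d : Fin k₂ → ℝ) (θ : dIdx n k₁ k₂ → ℝ) :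
    fObj X A Γ y b d θ = 1 / 2 * (betaOf X A Γ θ ⬝ᵥ betaOf X A Γ θ) + lvec y b d ⬝ᵥ θ := by
  rw [fObj, ← mulVec_mulVec, dotProduct_mulVec, ← mulVec_transpose,
    betaOf_eq_neg_transpose_mulVec, neg_dotProduct_neg]

lemma betaOf_dotProduct (θ : dIdx n k₁ k₂ → ℝ) (β : Fin p → ℝ) :
    betaOf X A Γ θ ⬝ᵥ β = -(lvec (X *ᵥ β) (A *ᵥ β) (Γ *ᵥ β) ⬝ᵥ θ) := by
  rw [betaOf_eq_neg_transpose_mulVec, neg_dotProduct, mulVec_transpose, ← dotProduct_mulVec,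
    Mmat_mulVec, dotProduct_comm]

end DualGeometry

lemma neg_penalty_le_sum_dual_mul_residual {n k₁ k₂ : ℕ} {C ν : ℝ} {θ : dIdx n k₁ k₂ → ℝ}
    (hθ : DualFeasible C ν θ) {r ξ ξs : Fin n → ℝ} {β₀ ε : ℝ}
    (hlo : ∀ i, β₀ - r i ≤ ε + ξ i) (hhi : ∀ i, r i - β₀ ≤ ε + ξs i)
    (hξ : ∀ i, 0 ≤ ξ i) (hξs : ∀ i, 0 ≤ ξs i) (hε : 0 ≤ ε) :
    -(C * (ν * ε + 1 / n * ∑ i, (ξ i + ξs i)))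
      ≤ ∑ i, r i * (θ (.inl (.inl i)) - θ (.inl (.inr i))) := by
  obtain ⟨hα, hαs, hsum, hbal, -⟩ := hθ
  have hterm : ∀ i, -(ε * (θ (.inl (.inl i)) + θ (.inl (.inr i)))) - C / n * (ξ i + ξs i)
      ≤ (r i - β₀) * (θ (.inl (.inl i)) - θ (.inl (.inr i))) := fun i => by
    nlinarith [hα i, hαs i, hlo i, hhi i, hξ i, hξs i]
  -- the balance constraint lets the intercept β₀ enter the residuals for free
  have hshift : ∑ i, r i * (θ (.inl (.inl i)) - θ (.inl (.inr i)))
      = ∑ i, (r i - β₀) * (θ (.inl (.inl i)) - θ (.inl (.inr i))) := by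
    simp only [sub_mul, Finset.sum_sub_distrib, ← Finset.mul_sum, hbal, mul_zero, sub_zero]
  calc -(C * (ν * ε + 1 / n * ∑ i, (ξ i + ξs i)))
      ≤ -(ε * ∑ i, (θ (.inl (.inl i)) + θ (.inl (.inr i)))) - C / n * ∑ i, (ξ i + ξs i) := by
        have := mul_le_mul_of_nonneg_left hsum hε
        have : C / n * ∑ i, (ξ i + ξs i) = C * (1 / n * ∑ i, (ξ i + ξs i)) := by ring
        linarith
    _ = ∑ i, (-(ε * (θ (.inl (.inl i)) + θ (.inl (.inr i)))) - C / n * (ξ i + ξs i)) := by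
        simp only [Finset.sum_sub_distrib, Finset.sum_neg_distrib, Finset.mul_sum]
    _ ≤ _ := hshift ▸ Finset.sum_le_sum fun i _ => hterm i

lemma lvec_dotProduct_add_betaOf_dotProduct_add_penalty_nonneg {n p k₁ k₂ : ℕ}
    {X : Matrix (Fin n) (Fin p) ℝ} {A : Matrix (Fin k₁) (Fin p) ℝ}
    {Γ : Matrix (Fin k₂) (Fin p) ℝ} {y : Fin n → ℝ} {b : Fin k₁ → ℝ} {d : Fin k₂ → ℝ}
    {C ν : ℝ} {θ : dIdx n k₁ k₂ → ℝ} (hθ : DualFeasible C ν θ)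
    {β : Fin p → ℝ} {β₀ : ℝ} {ξ ξs : Fin n → ℝ} {ε : ℝ}
    (hprim : PrimalFeasible X A Γ y b d β β₀ ξ ξs ε) :
    0 ≤ lvec y b d ⬝ᵥ θ + betaOf X A Γ θ ⬝ᵥ β
      + C * (ν * ε + 1 / n * ∑ i, (ξ i + ξs i)) := by
  obtain ⟨hup, hdown, hξ, hξs, hε, hA, hΓ⟩ := hprim
  have hsvr := neg_penalty_le_sum_dual_mul_residual hθ (r := y - X *ᵥ β) (β₀ := β₀)
    (fun i => by simp only [Pi.sub_apply]; linarith [hup i, show (X *ᵥ β) i = X i ⬝ᵥ β from rfl])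
    (fun i => by simp only [Pi.sub_apply]; linarith [hdown i, show (X *ᵥ β) i = X i ⬝ᵥ β from rfl])
    hξ hξs hε
  have hineq : 0 ≤ ∑ j, (b - A *ᵥ β) j * θ (.inr (.inl j)) :=
    Finset.sum_nonneg fun j _ => mul_nonneg (sub_nonneg.2 (hA j)) (hθ.2.2.2.2 j)
  rw [betaOf_dotProduct, ← sub_eq_add_neg, ← sub_dotProduct, lvec_sub, lvec_dotProduct, hΓ]
  simp only [sub_self, Pi.zero_apply, zero_mul, Finset.sum_const_zero, sub_zero]
  linarith

lemma half_dotProduct_betaOf_sub_le {n p k₁ k₂ : ℕ}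
    {X : Matrix (Fin n) (Fin p) ℝ} {A : Matrix (Fin k₁) (Fin p) ℝ}
    {Γ : Matrix (Fin k₂) (Fin p) ℝ} {y : Fin n → ℝ} {b : Fin k₁ → ℝ} {d : Fin k₂ → ℝ}
    {C ν : ℝ} {θ : dIdx n k₁ k₂ → ℝ} (hθ : DualFeasible C ν θ)
    {β : Fin p → ℝ} {β₀ : ℝ} {ξ ξs : Fin n → ℝ} {ε : ℝ}
    (hprim : PrimalFeasible X A Γ y b d β β₀ ξ ξs ε) :
    1 / 2 * ((betaOf X A Γ θ - β) ⬝ᵥ (betaOf X A Γ θ - β))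
      ≤ fObj X A Γ y b d θ
        + (1 / 2 * (β ⬝ᵥ β) + C * (ν * ε + 1 / n * ∑ i, (ξ i + ξs i))) := by
  have := lvec_dotProduct_add_betaOf_dotProduct_add_penalty_nonneg hθ hprim
  rw [fObj_eq]
  simp only [sub_dotProduct, dotProduct_sub, dotProduct_comm β (betaOf X A Γ θ)]
  linarith

lemma tendsto_of_dotProduct_self_sub_le {ι α : Type*} [Fintype ι] {l : Filter α}
    {u : α → ι → ℝ} {a : ι → ℝ} {g : α → ℝ} (hg : Filter.Tendsto g l (nhds 0))
    (hle : ∀ k, (u k - a) ⬝ᵥ (u k - a) ≤ g k) : Filter.Tendsto u l (nhds a) := by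
  rw [tendsto_pi_nhds]
  intro j
  rw [tendsto_iff_norm_sub_tendsto_zero]
  have hsqrt : Filter.Tendsto (fun k => √(g k)) l (nhds 0) := by
    simpa using hg.sqrt
  refine squeeze_zero (fun _ => norm_nonneg _) (fun k => Real.abs_le_sqrt ?_) hsqrt
  calc (u k j - a j) ^ 2 = (u k - a) j * (u k - a) j := by simp [sq]
    _ ≤ (u k - a) ⬝ᵥ (u k - a) :=
        Finset.single_le_sum (f := fun i => (u k - a) i * (u k - a) i)
          (fun i _ => mul_self_nonneg _) (Finset.mem_univ j)
    _ ≤ g k := hle k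

theorem stmt19_general (n p k₁ k₂ : ℕ) (X : Matrix (Fin n) (Fin p) ℝ) (y : Fin n → ℝ)
    (A : Matrix (Fin k₁) (Fin p) ℝ) (Γ : Matrix (Fin k₂) (Fin p) ℝ)
    (b : Fin k₁ → ℝ) (d : Fin k₂ → ℝ) (C ν : ℝ)
    (θseq : ℕ → dIdx n k₁ k₂ → ℝ) (hθ : ∀ k, DualFeasible C ν (θseq k))
    (βopt : Fin p → ℝ) (β₀opt : ℝ) (ξopt ξsopt : Fin n → ℝ) (εopt : ℝ)
    (hprim : PrimalFeasible X A Γ y b d βopt β₀opt ξopt ξsopt εopt)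
    (θopt : dIdx n k₁ k₂ → ℝ)
    (hgap : (1 / 2) * (βopt ⬝ᵥ βopt)
        + C * (ν * εopt + (1 / (n : ℝ)) * ∑ i, (ξopt i + ξsopt i)) =
          -(fObj X A Γ y b d θopt))
    (hf : Filter.Tendsto (fun k => fObj X A Γ y b d (θseq k)) Filter.atTop
      (nhds (fObj X A Γ y b d θopt))) :
    Filter.Tendsto (fun k => betaOf X A Γ (θseq k)) Filter.atTop (nhds βopt) := by
  refine tendsto_of_dotProduct_self_sub_le
    (g := fun k => 2 * (fObj X A Γ y b d (θseq k) - fObj X A Γ y b d θopt)) ?_ fun k => ?_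
  · simpa using (hf.sub_const (fObj X A Γ y b d θopt)).const_mul 2
  · have := half_dotProduct_betaOf_sub_le (hθ k) hprim
    rw [hgap] at this
    linarith

/-- if (θᵏ) are dual feasible, (β°, β₀°, ξ°, ξ*°, ε°) is primal
feasible, θ° satisfies the zero-duality-gap identity and f(θᵏ) → f(θ°),
then β(θᵏ) → β°. -/
theorem stmt19 (n p k₁ k₂ : ℕ) (X : Matrix (Fin n) (Fin p) ℝ) (y : Fin n → ℝ)
    (A : Matrix (Fin k₁) (Fin p) ℝ) (Γ : Matrix (Fin k₂) (Fin p) ℝ)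
    (b : Fin k₁ → ℝ) (d : Fin k₂ → ℝ) (C ν : ℝ)
    (hC : 0 < C) (hν : ν ∈ Set.Ioc (0 : ℝ) 1)
    (θseq : ℕ → dIdx n k₁ k₂ → ℝ) (hθ : ∀ k, DualFeasible C ν (θseq k))
    (βopt : Fin p → ℝ) (β₀opt : ℝ) (ξopt ξsopt : Fin n → ℝ) (εopt : ℝ)
    (hprim : PrimalFeasible X A Γ y b d βopt β₀opt ξopt ξsopt εopt)
    (θopt : dIdx n k₁ k₂ → ℝ)
    (hgap : (1 / 2) * (βopt ⬝ᵥ βopt)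
        + C * (ν * εopt + (1 / (n : ℝ)) * ∑ i, (ξopt i + ξsopt i)) =
          -(fObj X A Γ y b d θopt))
    (hf : Filter.Tendsto (fun k => fObj X A Γ y b d (θseq k)) Filter.atTop
      (nhds (fObj X A Γ y b d θopt))) :
    Filter.Tendsto (fun k => betaOf X A Γ (θseq k)) Filter.atTop (nhds βopt) :=
  stmt19_general n p k₁ k₂ X y A Γ b d C ν θseq hθ βopt β₀opt ξopt ξsopt εopt hprim θopt hgap hf
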